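/- arXiv:1402.2597 — 5 statements merged into one kernel-verified Lean document; each statement's English description precedes it below -/
import Mathlib

section
/- Let F ⊂ ℝ^2_{≥0} be a convex body, 𝔉 = ⋃_{i≥0}(iF ∩ ℕ^2) the associated convex body semigroup, and P ∈ ℕ^2 a nonzero point. Let τ be the ray from the origin through P and suppose τ ∩ F = [A,B] is a nonempty segment with d(A) ≤ d(B), where d denotes Euclidean distance to the origin, and 0 ∉ F. Then P ∈ 𝔉 if and only if there exists k ∈ ℕ with d(P)/d(B) ≤ k ≤ d(P)/d(A). -/
open scoped Pointwise

/-- Coercion of a lattice point of `ℕ²` into the Euclidean plane. -/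
def toE2 (x : Fin 2 → ℕ) : EuclideanSpace ℝ (Fin 2) := WithLp.toLp 2 (fun i => (x i : ℝ))

/-- The convex body semigroup `𝔉 = ⋃ i, (i·F ∩ ℕ²)` of `F` in the Euclidean plane. -/
def cbSG (F : Set (EuclideanSpace ℝ (Fin 2))) : Set (Fin 2 → ℕ) :=
  {x | ∃ i : ℕ, toE2 x ∈ (i : ℝ) • F}

/-!
Write `A = a • P` and `B = b • P`; then `a > 0` since `0 ∉ F`, and the ray through `P` meets `F`
exactly in `{t • P | a ≤ t ≤ b}`. So `P ∈ k • F` iff `k⁻¹ ∈ [a, b]`, i.e. `b⁻¹ ≤ k ≤ a⁻¹`, and these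
bounds are `d(P) / d(B)` and `d(P) / d(A)`.
-/

section Segment

variable {E : Type*} [AddCommGroup E] [Module ℝ E]

theorem segment_smul_smul_eq_image (v : E) {a b : ℝ} (hab : a ≤ b) :
    segment ℝ (a • v) (b • v) = (· • v) '' Set.Icc a b := by
  rw [← segment_eq_Icc hab]
  exact (image_segment ℝ (LinearMap.toSpanSingleton ℝ E v).toAffineMap a b).symm

theorem smul_mem_segment_smul_smul_iff {v : E} (hv : v ≠ 0) {a b t : ℝ} (hab : a ≤ b) :
    t • v ∈ segment ℝ (a • v) (b • v) ↔ t ∈ Set.Icc a b := by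
  rw [segment_smul_smul_eq_image v hab]
  exact (smul_left_injective ℝ hv).mem_set_image

end Segment

section Ray

variable {E : Type*} [NormedAddCommGroup E] [NormedSpace ℝ E] {F : Set E} {v A B : E}

theorem mem_smul_set_iff_of_ray_inter_eq_segment
    (hseg : {y | ∃ t : ℝ, 0 ≤ t ∧ y = t • v} ∩ F = segment ℝ A B) (h0 : (0 : E) ∉ F)
    (hAB : ‖A‖ ≤ ‖B‖) {c : ℝ} (hc : 0 ≤ c) :
    v ∈ c • F ↔ ‖v‖ / ‖B‖ ≤ c ∧ c ≤ ‖v‖ / ‖A‖ := by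
  obtain ⟨⟨a, ha, hA⟩, hAF⟩ := hseg ▸ left_mem_segment ℝ A B
  obtain ⟨⟨b, hb, hB⟩, -⟩ := hseg ▸ right_mem_segment ℝ A B
  subst hA hB
  have hav : a • v ≠ 0 := fun h => h0 (h ▸ hAF)
  have hv : v ≠ 0 := right_ne_zero_of_smul hav
  have hnv : 0 < ‖v‖ := norm_pos_iff.mpr hv
  replace ha : 0 < a := ha.lt_of_ne (left_ne_zero_of_smul hav).symm
  have hab : a ≤ b := by
    rw [norm_smul, norm_smul, Real.norm_of_nonneg ha.le, Real.norm_of_nonneg hb] at hAB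
    exact le_of_mul_le_mul_right hAB hnv
  replace hb : 0 < b := ha.trans_le hab
  have hratio : ∀ {s : ℝ}, 0 < s → ‖v‖ / ‖s • v‖ = s⁻¹ := fun hs => by
    rw [norm_smul, Real.norm_of_nonneg hs.le]
    field_simp
  rw [hratio ha, hratio hb]
  rcases hc.eq_or_lt with rfl | hc
  · simp [Set.zero_smul_set ⟨_, hAF⟩, hv, hb.not_ge]
  have hray : ∀ {t : ℝ}, 0 ≤ t → (t • v ∈ F ↔ t ∈ Set.Icc a b) := fun {t} ht => by
    rw [← smul_mem_segment_smul_smul_iff hv hab, ← hseg]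
    exact ⟨fun h => ⟨⟨t, ht, rfl⟩, h⟩, And.right⟩
  rw [Set.mem_smul_set_iff_inv_smul_mem₀ hc.ne', hray (inv_nonneg.mpr hc.le), Set.mem_Icc,
    le_inv_comm₀ ha hc, inv_le_comm₀ hc hb, and_comm]

end Ray

theorem stmt3_general (F : Set (EuclideanSpace ℝ (Fin 2)))
    (h0 : (0 : EuclideanSpace ℝ (Fin 2)) ∉ F)
    (P : Fin 2 → ℕ) (A B : EuclideanSpace ℝ (Fin 2))
    (hseg : {y | ∃ t : ℝ, 0 ≤ t ∧ y = t • toE2 P} ∩ F = segment ℝ A B)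
    (hAB : ‖A‖ ≤ ‖B‖) :
    P ∈ cbSG F ↔ ∃ k : ℕ, ‖toE2 P‖ / ‖B‖ ≤ (k : ℝ) ∧ (k : ℝ) ≤ ‖toE2 P‖ / ‖A‖ :=
  exists_congr fun k => mem_smul_set_iff_of_ray_inter_eq_segment hseg h0 hAB k.cast_nonneg

/-- Let `F` be a compact convex body in the nonnegative quadrant with
`0 ∉ F`, `𝔉` its convex body semigroup, and `P ∈ ℕ²` nonzero. If the ray `τ` from the
origin through `P` meets `F` in the segment `[A,B]` with `d(A) ≤ d(B)`, then
`P ∈ 𝔉 ↔ ∃ k ∈ ℕ, d(P)/d(B) ≤ k ≤ d(P)/d(A)`. -/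
theorem stmt3 (F : Set (EuclideanSpace ℝ (Fin 2))) (hconv : Convex ℝ F)
    (hcomp : IsCompact F) (hpos : ∀ x ∈ F, ∀ i, 0 ≤ x i)
    (h0 : (0 : EuclideanSpace ℝ (Fin 2)) ∉ F)
    (P : Fin 2 → ℕ) (hP : P ≠ 0) (A B : EuclideanSpace ℝ (Fin 2))
    (hseg : {y | ∃ t : ℝ, 0 ≤ t ∧ y = t • toE2 P} ∩ F = segment ℝ A B)
    (hAB : ‖A‖ ≤ ‖B‖) :
    P ∈ cbSG F ↔ ∃ k : ℕ, ‖toE2 P‖ / ‖B‖ ≤ (k : ℝ) ∧ (k : ℝ) ≤ ‖toE2 P‖ / ‖A‖ :=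
  stmt3_general F h0 P A B hseg hAB
end

section
/- Let S ⊆ ℕ^2 be a simplicial affine semigroup with extremal rays τ_1, τ_2 of its rational cone, and let n_1 ∈ S ∩ τ_1, n_2 ∈ S ∩ τ_2 be the nonzero elements of minimal norm on each ray. If the set int(𝒞) \ int(S) is a non-empty finite set, where 𝒞 = L_{ℚ≥}(S) ∩ ℕ^2 and int denotes removal of the boundary rays, then there exists a ∈ 𝒞 \ S with a + n_1 ∈ S and a + n_2 ∈ S. -/
open Set
open scoped Pointwise

/-- Coercion of a lattice point of `ℕ²` into `ℚ²`. -/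
def toQ (x : Fin 2 → ℕ) : Fin 2 → ℚ := fun i => (x i : ℚ)

/-- The rational cone `L_{ℚ≥}(G)` generated by a subset `G ⊆ ℚ²`. -/
def coneQ (G : Set (Fin 2 → ℚ)) : Set (Fin 2 → ℚ) :=
  {x | ∃ (n : ℕ) (q : Fin n → ℚ) (f : Fin n → (Fin 2 → ℚ)),
    (∀ i, 0 ≤ q i) ∧ (∀ i, f i ∈ G) ∧ x = ∑ i, q i • f i}

/-- The ray from the origin through `v ∈ ℚ²`. -/
def rayQ (v : Fin 2 → ℚ) : Set (Fin 2 → ℚ) := {x | ∃ q : ℚ, 0 ≤ q ∧ x = q • v}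

/-- The lattice points on the ray from the origin through `v`. -/
def rayN (v : Fin 2 → ℕ) : Set (Fin 2 → ℕ) := {x | toQ x ∈ rayQ (toQ v)}

/-- Square of the Euclidean norm of a lattice point. -/
def normSq (x : Fin 2 → ℕ) : ℕ := x 0 ^ 2 + x 1 ^ 2

/-- The cone `𝒞 = L_{ℚ≥}(S) ∩ ℕ²` of a subsemigroup `S ⊆ ℕ²`. -/
def coneN (S : Set (Fin 2 → ℕ)) : Set (Fin 2 → ℕ) := {x | toQ x ∈ coneQ (toQ '' S)}

/-- The interior `int(X)` of `X` relative to the extremal rays through `v1, v2`. -/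
def interiorOf (X : Set (Fin 2 → ℕ)) (v1 v2 : Fin 2 → ℕ) : Set (Fin 2 → ℕ) :=
  X \ (rayN v1 ∪ rayN v2)

/-- `S̄ = {a ∈ ℕ² : a + g ∈ S for every generator g ∈ G}`. -/
def sbar (S : Set (Fin 2 → ℕ)) (G : Finset (Fin 2 → ℕ)) : Set (Fin 2 → ℕ) :=
  {a | ∀ g ∈ G, a + g ∈ S}

/-- `n` is the nonzero element of minimal (Euclidean) norm of `T` on the ray `τ`. -/
def IsMinOnRay (T τ : Set (Fin 2 → ℕ)) (n : Fin 2 → ℕ) : Prop :=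
  n ∈ T ∩ τ ∧ n ≠ 0 ∧ ∀ m ∈ T ∩ τ, m ≠ 0 → normSq n ≤ normSq m

/-- The Cohen–Macaulay criterion for a simplicial semigroup `T ⊆ ℕ²` with cone `C`
and extremal rays `τ1, τ2`: for the minimal elements `n1, n2` of `T` on the two rays,
every `a ∈ C \ T` satisfies `a + n1 ∉ T` or `a + n2 ∉ T`. -/
def IsCMsg (T C τ1 τ2 : Set (Fin 2 → ℕ)) : Prop :=
  ∃ n1 n2 : Fin 2 → ℕ, IsMinOnRay T τ1 n1 ∧ IsMinOnRay T τ2 n2 ∧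
    ∀ a ∈ C \ T, a + n1 ∉ T ∨ a + n2 ∉ T

/-- `S` is Buchsbaum iff (Rosales) the semigroup `S̄` is Cohen–Macaulay. -/
def IsBuchsbaumSG (S : Set (Fin 2 → ℕ)) (G : Finset (Fin 2 → ℕ))
    (C τ1 τ2 : Set (Fin 2 → ℕ)) : Prop :=
  IsCMsg (sbar S G) C τ1 τ2

/-- A subsemigroup of `ℕ²` is generated by a single element. -/
def genByOne (T : Set (Fin 2 → ℕ)) : Prop :=
  ∃ n : Fin 2 → ℕ, T = {x | ∃ k : ℕ, x = k • n}

/-- The circle semigroup of the circle (disk) of center `(a,b)` and radius `r`. -/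
def circleSG (a b r : ℝ) : Set (Fin 2 → ℕ) :=
  {x | ∃ i : ℕ, ((x 0 : ℝ) - i * a) ^ 2 + ((x 1 : ℝ) - i * b) ^ 2 ≤ (i * r) ^ 2}

/-- The convex body semigroup `⋃ i, (i·F ∩ ℕ²)` of a convex body `F ⊆ ℚ²`. -/
def polySG (F : Set (Fin 2 → ℚ)) : Set (Fin 2 → ℕ) :=
  {x | ∃ i : ℕ, toQ x ∈ (i : ℚ) • F}

/-- `G` is a minimal generating set of the semigroup `S`. -/
def minimalGenSet (S : Set (Fin 2 → ℕ)) (G : Finset (Fin 2 → ℕ)) : Prop :=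
  (AddSubmonoid.closure (G : Set (Fin 2 → ℕ)) : Set (Fin 2 → ℕ)) = S ∧
  ∀ g ∈ G, g ∉ (AddSubmonoid.closure ((G.erase g : Finset (Fin 2 → ℕ)) :
    Set (Fin 2 → ℕ)) : Set (Fin 2 → ℕ))

/-- `S` is simplicial with extremal rays through `v1` and `v2`. -/
def Simplicial (S : Set (Fin 2 → ℕ)) (v1 v2 : Fin 2 → ℕ) : Prop :=
  v1 ≠ 0 ∧ v2 ≠ 0 ∧ rayN v1 ≠ rayN v2 ∧
  coneQ (toQ '' S) = coneQ {toQ v1, toQ v2}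

/- Take `a` maximal, for the componentwise order, in the finite set
`int(𝒞) \ int(S)`. Adding a nonzero element of a boundary ray to a point of `int(𝒞)` stays in
`int(𝒞)`, so by maximality `a + n₁` and `a + n₂` leave `int(𝒞) \ int(S)` only by entering
`int(S) ⊆ S`. -/

lemma Set.Finite.exists_forall_add_notMem {M : Type*} [AddCommMonoid M] [PartialOrder M]
    [IsOrderedCancelAddMonoid M] [CanonicallyOrderedAdd M] {D : Set M} (hfin : D.Finite)
    (hne : D.Nonempty) : ∃ a ∈ D, ∀ n ≠ 0, a + n ∉ D := by
  obtain ⟨a, ha⟩ := hfin.exists_maximal hne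
  refine ⟨a, ha.prop, fun n hn hD => hn ?_⟩
  have : a + n ≤ a + 0 := by simpa using ha.le_of_ge hD le_self_add
  exact nonpos_iff_eq_zero.mp (le_of_add_le_add_left this)

lemma mem_coneQ_pair {u w x : Fin 2 → ℚ} :
    x ∈ coneQ {u, w} ↔ ∃ α β : ℚ, 0 ≤ α ∧ 0 ≤ β ∧ x = α • u + β • w := by
  constructor
  · rintro ⟨n, q, f, hq, hf, rfl⟩
    refine ⟨∑ i, if f i = u then q i else 0, ∑ i, if f i = u then 0 else q i,
      Finset.sum_nonneg fun i _ => by split; exacts [hq i, le_rfl],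
      Finset.sum_nonneg fun i _ => by split; exacts [le_rfl, hq i], ?_⟩
    rw [Finset.sum_smul, Finset.sum_smul, ← Finset.sum_add_distrib]
    refine Finset.sum_congr rfl fun i _ => ?_
    by_cases h : f i = u
    · simp [h]
    · have hw : f i = w := (hf i).resolve_left h
      have hwu : w ≠ u := fun hwu => h (hw.trans hwu)
      simp [hw, hwu]
  · rintro ⟨α, β, hα, hβ, rfl⟩
    refine ⟨2, ![α, β], ![u, w], fun i => ?_, fun i => ?_, by simp [Fin.sum_univ_two]⟩
    · fin_cases i <;> simpa
    · fin_cases i <;> simp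

lemma toQ_add (x y : Fin 2 → ℕ) : toQ (x + y) = toQ x + toQ y := by
  funext i; simp [toQ]

lemma rayN_eq_of_toQ_eq_smul {v w : Fin 2 → ℕ} (hw : w ≠ 0) {c : ℚ}
    (h : toQ w = c • toQ v) : rayN v = rayN w := by
  obtain ⟨i, hi⟩ : ∃ i, w i ≠ 0 := Function.ne_iff.mp hw
  have hwi : (w i : ℚ) = c * v i := by simpa [toQ] using congrFun h i
  have hc : 0 < c := by
    have : (0 : ℚ) < w i := by positivity
    exact pos_of_mul_pos_left (hwi ▸ this) (by positivity)
  have hray : rayQ (toQ v) = rayQ (toQ w) := by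
    ext y
    constructor
    · rintro ⟨t, ht, rfl⟩
      exact ⟨t / c, by positivity, by rw [h, smul_smul, div_mul_cancel₀ t hc.ne']⟩
    · rintro ⟨t, ht, rfl⟩
      exact ⟨t * c, by positivity, by rw [h, smul_smul]⟩
  simp only [rayN, hray]

section Simplicial

variable {S : Set (Fin 2 → ℕ)} {v1 v2 : Fin 2 → ℕ}

lemma Simplicial.mem_coneN_iff (hsimp : Simplicial S v1 v2) {x : Fin 2 → ℕ} :
    x ∈ coneN S ↔ ∃ α β : ℚ, 0 ≤ α ∧ 0 ≤ β ∧ toQ x = α • toQ v1 + β • toQ v2 := by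
  rw [coneN, mem_ofPred_eq, hsimp.2.2.2, mem_coneQ_pair]

lemma Simplicial.notMem_rayN_union (hsimp : Simplicial S v1 v2) {x : Fin 2 → ℕ} {α β : ℚ}
    (hα : 0 < α) (hβ : 0 < β) (hx : toQ x = α • toQ v1 + β • toQ v2) :
    x ∉ rayN v1 ∪ rayN v2 := by
  obtain ⟨hv1, hv2, hrays, -⟩ := hsimp
  rintro (⟨q, -, hq⟩ | ⟨q, -, hq⟩)
  · have : toQ v2 = (β⁻¹ * (q - α)) • toQ v1 := by
      rw [mul_smul, sub_smul, ← hq, hx, add_sub_cancel_left, inv_smul_smul₀ hβ.ne']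
    exact hrays (rayN_eq_of_toQ_eq_smul hv2 this)
  · have : toQ v1 = (α⁻¹ * (q - β)) • toQ v2 := by
      rw [mul_smul, sub_smul, ← hq, hx, add_sub_cancel_right, inv_smul_smul₀ hα.ne']
    exact hrays (rayN_eq_of_toQ_eq_smul hv1 this).symm

lemma Simplicial.mem_interiorOf_coneN_iff (hsimp : Simplicial S v1 v2) {x : Fin 2 → ℕ} :
    x ∈ interiorOf (coneN S) v1 v2 ↔
      ∃ α β : ℚ, 0 < α ∧ 0 < β ∧ toQ x = α • toQ v1 + β • toQ v2 := by
  refine ⟨fun ⟨hC, hR⟩ => ?_, fun ⟨α, β, hα, hβ, hx⟩ => ?_⟩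
  · obtain ⟨α, β, hα, hβ, hx⟩ := hsimp.mem_coneN_iff.mp hC
    refine ⟨α, β, hα.lt_of_ne ?_, hβ.lt_of_ne ?_, hx⟩
    · rintro rfl
      exact hR (Or.inr ⟨β, hβ, by simpa using hx⟩)
    · rintro rfl
      exact hR (Or.inl ⟨α, hα, by simpa using hx⟩)
  · exact ⟨hsimp.mem_coneN_iff.mpr ⟨α, β, hα.le, hβ.le, hx⟩,
      hsimp.notMem_rayN_union hα hβ hx⟩

lemma Simplicial.add_mem_interiorOf_coneN (hsimp : Simplicial S v1 v2) {x n : Fin 2 → ℕ}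
    (hx : x ∈ interiorOf (coneN S) v1 v2) (hn : n ∈ coneN S) :
    x + n ∈ interiorOf (coneN S) v1 v2 := by
  obtain ⟨α, β, hα, hβ, hx⟩ := hsimp.mem_interiorOf_coneN_iff.mp hx
  obtain ⟨γ, δ, hγ, hδ, hn⟩ := hsimp.mem_coneN_iff.mp hn
  refine hsimp.mem_interiorOf_coneN_iff.mpr ⟨α + γ, β + δ, by positivity, by positivity, ?_⟩
  rw [toQ_add, hx, hn, add_smul, add_smul]
  abel

lemma Simplicial.rayN_left_subset_coneN (hsimp : Simplicial S v1 v2) : rayN v1 ⊆ coneN S :=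
  fun _ ⟨q, hq, hx⟩ => hsimp.mem_coneN_iff.mpr ⟨q, 0, hq, le_rfl, by simpa using hx⟩

lemma Simplicial.rayN_right_subset_coneN (hsimp : Simplicial S v1 v2) : rayN v2 ⊆ coneN S :=
  fun _ ⟨q, hq, hx⟩ => hsimp.mem_coneN_iff.mpr ⟨0, q, le_rfl, hq, by simpa using hx⟩

end Simplicial

theorem stmt4_general (S : Set (Fin 2 → ℕ))
    (v1 v2 n1 n2 : Fin 2 → ℕ) (hsimp : Simplicial S v1 v2)
    (hn1 : IsMinOnRay S (rayN v1) n1) (hn2 : IsMinOnRay S (rayN v2) n2)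
    (hfin : (interiorOf (coneN S) v1 v2 \ interiorOf S v1 v2).Finite)
    (hne : (interiorOf (coneN S) v1 v2 \ interiorOf S v1 v2).Nonempty) :
    ∃ a ∈ coneN S \ S, a + n1 ∈ S ∧ a + n2 ∈ S := by
  obtain ⟨a, ⟨haC, haS⟩, hmax⟩ := hfin.exists_forall_add_notMem hne
  have mem_S {n : Fin 2 → ℕ} (hn0 : n ≠ 0) (hn : n ∈ coneN S) : a + n ∈ S := by
    by_contra h
    exact hmax n hn0 ⟨hsimp.add_mem_interiorOf_coneN haC hn, fun hS => h hS.1⟩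
  refine ⟨a, ⟨haC.1, fun h => haS ⟨h, haC.2⟩⟩, ?_, ?_⟩
  · exact mem_S hn1.2.1 (hsimp.rayN_left_subset_coneN hn1.1.2)
  · exact mem_S hn2.2.1 (hsimp.rayN_right_subset_coneN hn2.1.2)

/-- If `S ⊆ ℕ²` is a simplicial affine semigroup whose set
`int(𝒞) \ int(S)` is non-empty and finite, then there is `a ∈ 𝒞 \ S` with
`a + n_1 ∈ S` and `a + n_2 ∈ S` (so `S` is not Cohen–Macaulay). -/
theorem stmt4 (S : Set (Fin 2 → ℕ)) (G : Finset (Fin 2 → ℕ))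
    (hG : (AddSubmonoid.closure (G : Set (Fin 2 → ℕ)) : Set (Fin 2 → ℕ)) = S)
    (v1 v2 n1 n2 : Fin 2 → ℕ) (hsimp : Simplicial S v1 v2)
    (hn1 : IsMinOnRay S (rayN v1) n1) (hn2 : IsMinOnRay S (rayN v2) n2)
    (hfin : (interiorOf (coneN S) v1 v2 \ interiorOf S v1 v2).Finite)
    (hne : (interiorOf (coneN S) v1 v2 \ interiorOf S v1 v2).Nonempty) :
    ∃ a ∈ coneN S \ S, a + n1 ∈ S ∧ a + n2 ∈ S :=
  stmt4_general S v1 v2 n1 n2 hsimp hn1 hn2 hfin hne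
end

section
/- Let S ⊆ ℕ^2 be a simplicial affine semigroup with 𝒞 = L_{ℚ≥}(S) ∩ ℕ^2, minimal generators containing elements n_1 ∈ τ_1, n_2 ∈ τ_2 on the extremal rays, and S̄ = {a ∈ ℕ^2 : a + g ∈ S for all generators g}. If int(𝒞) = int(S̄) and S̄ ∩ τ_j is generated by one element n_j' for j = 1,2, then for every a ∈ 𝒞 \ S̄, at least one of a + n_1', a + n_2' does not belong to S̄. -/
open Set
open scoped Pointwise

lemma rayN_add {v x y : Fin 2 → ℕ} (hx : x ∈ rayN v) (hy : y ∈ rayN v) :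
    x + y ∈ rayN v := by
  obtain ⟨q, hq, hxq⟩ := hx
  obtain ⟨q', hq', hyq⟩ := hy
  exact ⟨q + q', by positivity, by rw [toQ_add, hxq, hyq, add_smul]⟩

lemma mem_rayN_union_of_interiorOf_eq {X Y : Set (Fin 2 → ℕ)} {v1 v2 a : Fin 2 → ℕ}
    (h : interiorOf X v1 v2 = interiorOf Y v1 v2) (haX : a ∈ X) (haY : a ∉ Y) :
    a ∈ rayN v1 ∪ rayN v2 := by
  by_contra hray
  have ha : a ∈ interiorOf Y v1 v2 := h ▸ ⟨haX, hray⟩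
  exact haY ha.1

lemma eq_nsmul_of_add_eq_nsmul {a n : Fin 2 → ℕ} {k : ℕ} (h : a + n = k • n) :
    a = (k - 1) • n := by
  funext i
  have hi := congrFun h i
  simp only [Pi.add_apply, Pi.smul_apply, smul_eq_mul] at hi ⊢
  rcases k with _ | k
  · omega
  · rw [Nat.add_sub_cancel]
    rw [Nat.succ_mul] at hi
    omega

lemma mem_of_add_mem_of_inter_rayN_eq {T : Set (Fin 2 → ℕ)} {v n a : Fin 2 → ℕ}
    (hT : T ∩ rayN v = {x | ∃ k : ℕ, x = k • n}) (ha : a ∈ rayN v) (han : a + n ∈ T) :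
    a ∈ T := by
  have hn : n ∈ T ∩ rayN v := hT ▸ ⟨1, (one_smul ℕ n).symm⟩
  have han' : a + n ∈ T ∩ rayN v := ⟨han, rayN_add ha hn.2⟩
  rw [hT] at han'
  obtain ⟨k, hk⟩ := han'
  have ha' : a ∈ T ∩ rayN v := hT ▸ ⟨k - 1, eq_nsmul_of_add_eq_nsmul hk⟩
  exact ha'.1

theorem stmt8_general (S : Set (Fin 2 → ℕ)) (G : Finset (Fin 2 → ℕ))
    (v1 v2 : Fin 2 → ℕ)
    (hint : interiorOf (coneN S) v1 v2 = interiorOf (sbar S G) v1 v2)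
    (n1' n2' : Fin 2 → ℕ)
    (h1 : sbar S G ∩ rayN v1 = {x | ∃ k : ℕ, x = k • n1'})
    (h2 : sbar S G ∩ rayN v2 = {x | ∃ k : ℕ, x = k • n2'}) :
    ∀ a ∈ coneN S \ sbar S G, a + n1' ∉ sbar S G ∨ a + n2' ∉ sbar S G := by
  rintro a ⟨haC, haS⟩
  rcases mem_rayN_union_of_interiorOf_eq hint haC haS with ha | ha
  · exact Or.inl fun han => haS (mem_of_add_mem_of_inter_rayN_eq h1 ha han)
  · exact Or.inr fun han => haS (mem_of_add_mem_of_inter_rayN_eq h2 ha han)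

/-- If `int(𝒞) = int(S̄)` and `S̄ ∩ τ_j` is generated by one
element `n_j'` for `j = 1, 2`, then for every `a ∈ 𝒞 \ S̄`, at least one of
`a + n_1'`, `a + n_2'` does not belong to `S̄`. -/
theorem stmt8 (S : Set (Fin 2 → ℕ)) (G : Finset (Fin 2 → ℕ))
    (hG : (AddSubmonoid.closure (G : Set (Fin 2 → ℕ)) : Set (Fin 2 → ℕ)) = S)
    (v1 v2 n1 n2 : Fin 2 → ℕ) (hsimp : Simplicial S v1 v2)
    (hn1G : n1 ∈ G) (hn2G : n2 ∈ G)
    (hn1 : IsMinOnRay S (rayN v1) n1) (hn2 : IsMinOnRay S (rayN v2) n2)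
    (hint : interiorOf (coneN S) v1 v2 = interiorOf (sbar S G) v1 v2)
    (n1' n2' : Fin 2 → ℕ)
    (h1 : sbar S G ∩ rayN v1 = {x | ∃ k : ℕ, x = k • n1'})
    (h2 : sbar S G ∩ rayN v2 = {x | ∃ k : ℕ, x = k • n2'}) :
    ∀ a ∈ coneN S \ sbar S G, a + n1' ∉ sbar S G ∨ a + n2' ∉ sbar S G :=
  stmt8_general S G v1 v2 hint n1' n2' h1 h2
end

section
/- Let S ⊆ ℕ^2 be a simplicial affine semigroup with extremal rays τ_1, τ_2 and let n_1' ∈ τ_1, n_2' ∈ τ_2 be nonzero elements of S. Suppose D ⊆ 𝒞 \ S is a non-empty finite set such that every a ∈ 𝒞 \ S lies in D. Then the element a_0 ∈ D maximizing the Euclidean norm satisfies a_0 + n_1' ∈ S and a_0 + n_2' ∈ S, hence S is not Cohen–Macaulay. -/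
open Set
open scoped Pointwise

lemma mem_coneQ_of_mem {G : Set (Fin 2 → ℚ)} {x : Fin 2 → ℚ} (hx : x ∈ G) : x ∈ coneQ G :=
  ⟨1, fun _ => 1, fun _ => x, fun _ => zero_le_one, fun _ => hx, by simp⟩

lemma coneQ_add {G : Set (Fin 2 → ℚ)} {x y : Fin 2 → ℚ}
    (hx : x ∈ coneQ G) (hy : y ∈ coneQ G) : x + y ∈ coneQ G := by
  obtain ⟨n, q, f, hq, hf, rfl⟩ := hx
  obtain ⟨m, p, g, hp, hg, rfl⟩ := hy
  refine ⟨n + m, Fin.append q p, Fin.append f g, ?_, ?_, ?_⟩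
  · exact Fin.addCases (by simpa using hq) (by simpa using hp)
  · exact Fin.addCases (by simpa using hf) (by simpa using hg)
  · simp [Fin.sum_univ_add]

lemma add_mem_coneN {S : Set (Fin 2 → ℕ)} {a n : Fin 2 → ℕ} (ha : a ∈ coneN S) (hn : n ∈ S) :
    a + n ∈ coneN S := by
  show toQ (a + n) ∈ coneQ (toQ '' S)
  rw [toQ_add]
  exact coneQ_add ha (mem_coneQ_of_mem (Set.mem_image_of_mem toQ hn))

lemma normSq_pos {n : Fin 2 → ℕ} (hn : n ≠ 0) : 0 < normSq n := by
  contrapose! hn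
  have h : n 0 = 0 ∧ n 1 = 0 := by simpa [normSq] using hn
  funext i
  fin_cases i <;> simp [h.1, h.2]

lemma normSq_lt_normSq_add (a : Fin 2 → ℕ) {n : Fin 2 → ℕ} (hn : n ≠ 0) :
    normSq a < normSq (a + n) := by
  have := normSq_pos hn
  simp only [normSq, Pi.add_apply] at this ⊢
  nlinarith [Nat.zero_le (a 0 * n 0), Nat.zero_le (a 1 * n 1)]

lemma add_mem_of_normSq_le {S : Set (Fin 2 → ℕ)} {a₀ n : Fin 2 → ℕ} (ha₀ : a₀ ∈ coneN S)
    (hmax : ∀ a ∈ coneN S \ S, normSq a ≤ normSq a₀) (hn : n ∈ S) (hn0 : n ≠ 0) :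
    a₀ + n ∈ S := by
  by_contra h
  exact (normSq_lt_normSq_add a₀ hn0).not_ge (hmax _ ⟨add_mem_coneN ha₀ hn, h⟩)

theorem stmt9_general (S : Set (Fin 2 → ℕ))
    (v1 v2 n1' n2' : Fin 2 → ℕ)
    (hn1 : n1' ∈ S ∩ rayN v1) (hn10 : n1' ≠ 0)
    (hn2 : n2' ∈ S ∩ rayN v2) (hn20 : n2' ≠ 0)
    (D : Set (Fin 2 → ℕ)) (hD : D ⊆ coneN S \ S)
    (hall : coneN S \ S ⊆ D)
    (a0 : Fin 2 → ℕ) (ha0 : a0 ∈ D) (hmax : ∀ a ∈ D, normSq a ≤ normSq a0) :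
    a0 + n1' ∈ S ∧ a0 + n2' ∈ S ∧
      ¬ (∀ a ∈ coneN S \ S, a + n1' ∉ S ∨ a + n2' ∉ S) := by
  have hmax' : ∀ a ∈ coneN S \ S, normSq a ≤ normSq a0 := fun a ha => hmax a (hall ha)
  have h1 := add_mem_of_normSq_le (hD ha0).1 hmax' hn1.1 hn10
  have h2 := add_mem_of_normSq_le (hD ha0).1 hmax' hn2.1 hn20
  exact ⟨h1, h2, fun hCM => (hCM a0 (hD ha0)).elim (· h1) (· h2)⟩

/-- If `D = 𝒞 \ S` is non-empty and finite, then its element `a₀`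
of maximal norm satisfies `a₀ + n_1' ∈ S` and `a₀ + n_2' ∈ S`, hence `S` is not
Cohen–Macaulay. -/
theorem stmt9 (S : Set (Fin 2 → ℕ)) (G : Finset (Fin 2 → ℕ))
    (hG : (AddSubmonoid.closure (G : Set (Fin 2 → ℕ)) : Set (Fin 2 → ℕ)) = S)
    (v1 v2 n1' n2' : Fin 2 → ℕ) (hsimp : Simplicial S v1 v2)
    (hn1 : n1' ∈ S ∩ rayN v1) (hn10 : n1' ≠ 0)
    (hn2 : n2' ∈ S ∩ rayN v2) (hn20 : n2' ≠ 0)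
    (D : Set (Fin 2 → ℕ)) (hD : D ⊆ coneN S \ S) (hDfin : D.Finite)
    (hDne : D.Nonempty) (hall : coneN S \ S ⊆ D)
    (a0 : Fin 2 → ℕ) (ha0 : a0 ∈ D) (hmax : ∀ a ∈ D, normSq a ≤ normSq a0) :
    a0 + n1' ∈ S ∧ a0 + n2' ∈ S ∧
      ¬ (∀ a ∈ coneN S \ S, a + n1' ∉ S ∨ a + n2' ∉ S) :=
  stmt9_general S v1 v2 n1' n2' hn1 hn10 hn2 hn20 D hD hall a0 ha0 hmax
end

section
/- Let F ⊂ ℝ^2_{≥0} be a triangle with rational vertices and 𝔓 = ⋃_{i≥0}(iF ∩ ℕ^2) its convex polygonal semigroup with minimal generating set {n_1,…,n_m}. Then 𝔓̄ = {a ∈ ℕ^2 : a + n_i ∈ 𝔓 for all i} equals 𝔓. -/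
open Set
open scoped Pointwise

/-!
Lift the triangle with vertices `V j` to the cone in `ℚ² × ℚ` spanned by the `(V j, 1)` and write
`σ` for the coordinates in this basis: a lattice point `x` lies in `𝔓` iff `σ (x, k) ≥ 0` for some
`k ∈ ℕ`. Suppose `a + n ∈ 𝔓` for every nonzero `n ∈ 𝔓`. Taking for `n` a lattice multiple of `V j`
gives an integer height `t j` at which every coordinate of `σ (a, t j)` except the `j`-th is
nonnegative (a vertex at the origin is handled through the other two). Each coordinate of
`σ (a, ·)` is affine in the height, so it is nonnegative on an interval. The median `t j` of the
three heights lies between the other two, at which the `j`-th coordinate is nonnegative, so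
`σ (a, t j) ≥ 0`; its height is the sum of the coordinates, hence a natural number, and `a ∈ 𝔓`.
With only two vertices there is no median: this is where the triangle is used.
-/

open Finset in
lemma exists_forall_mem_of_forall_ne {ι α : Type*} [Fintype ι] [LinearOrder α]
    (hι : 2 < Fintype.card ι) {I : ι → Set α} (hI : ∀ i, (I i).OrdConnected) {t : ι → α}
    (ht : ∀ i j, i ≠ j → t j ∈ I i) : ∃ j, ∀ i, t j ∈ I i := by
  classical
  have : Nonempty ι := Fintype.card_pos_iff.mp (by omega)
  obtain ⟨jmin, hmin⟩ := Finite.exists_min t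
  obtain ⟨jmax, hmax⟩ := Finite.exists_max t
  obtain ⟨j, -, hj⟩ := exists_mem_notMem_of_card_lt_card (s := {jmin, jmax}) (t := univ)
    ((card_le_two).trans_lt hι)
  rw [Finset.mem_insert, Finset.mem_singleton, not_or] at hj
  refine ⟨j, fun i => ?_⟩
  rcases eq_or_ne i j with rfl | hij
  · exact (hI i).out (ht i jmin hj.1) (ht i jmax hj.2) ⟨hmin i, hmax i⟩
  · exact ht i j hij

lemma AddSubmonoid.eq_zero_or_add_mem_closure {M : Type*} [AddMonoid M] {G : Set M} {a s : M}
    (ha : ∀ g ∈ G, a + g ∈ closure G) (hs : s ∈ closure G) : s = 0 ∨ a + s ∈ closure G := by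
  induction hs using closure_induction with
  | mem g hg => exact .inr (ha g hg)
  | zero => exact .inl rfl
  | add x y _ hy ihx ihy =>
    rcases ihx with rfl | hx
    · simpa using ihy
    · exact .inr (add_assoc a x y ▸ add_mem hx hy)

lemma exists_pos_natCast_mul_eq_natCast {ι : Type*} [Fintype ι] {v : ι → ℚ} (hv : ∀ i, 0 ≤ v i) :
    ∃ N : ℕ, 0 < N ∧ ∃ s : ι → ℕ, ∀ i, (s i : ℚ) = N * v i := by
  choose c hc using fun i => Finset.dvd_prod_of_mem (fun i => (v i).den) (Finset.mem_univ i)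
  refine ⟨∏ i, (v i).den, Finset.prod_pos fun i _ => (v i).den_pos,
    fun i => c i * (v i).num.toNat, fun i => ?_⟩
  rw [hc i]
  have hnum : ((v i).num.toNat : ℚ) = (v i).num := by
    exact_mod_cast Int.toNat_of_nonneg (Rat.num_nonneg.mpr (hv i))
  push_cast
  rw [hnum, ← Rat.mul_den_eq_num]
  ring

lemma AffineIndependent.linearIndependent_prodMk_one {ι k E : Type*} [Field k] [AddCommGroup E]
    [Module k E] {V : ι → E} (hV : AffineIndependent k V) :
    LinearIndependent k fun i => (V i, (1 : k)) := by
  rw [linearIndependent_iff']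
  intro s g hg
  have h := Prod.ext_iff.mp hg
  simp only [Prod.fst_sum, Prod.snd_sum, Prod.smul_mk, smul_eq_mul, mul_one] at h
  exact hV.eq_zero_of_sum_eq_zero h.2 h.1

lemma AffineIndependent.exists_basis_prodMk_one {ι k E : Type*} [Fintype ι] [Field k]
    [AddCommGroup E] [Module k E] [FiniteDimensional k E] {V : ι → E}
    (hV : AffineIndependent k V) (hcard : Fintype.card ι = Module.finrank k E + 1) :
    ∃ b : Module.Basis ι k (E × k), ∀ i, b i = (V i, 1) :=
  ⟨basisOfLinearIndependentOfCardEqFinrank' _ hV.linearIndependent_prodMk_one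
    (by rw [hcard, Module.finrank_prod, Module.finrank_self]), fun i => by simp⟩

lemma Module.Basis.exists_nonneg_sum_smul_eq_iff {ι 𝕜 M : Type*} [Fintype ι]
    [Field 𝕜] [LinearOrder 𝕜] [AddCommGroup M] [Module 𝕜 M] (b : Basis ι 𝕜 M) (z : M) :
    (∃ μ : ι → 𝕜, (∀ i, 0 ≤ μ i) ∧ ∑ i, μ i • b i = z) ↔ ∀ i, 0 ≤ b.repr z i := by
  constructor
  · rintro ⟨μ, hμ, rfl⟩ i
    rw [b.repr_sum_self]
    exact hμ i
  · exact fun hz => ⟨fun i => b.repr z i, hz, b.sum_repr z⟩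

lemma sum_smul_prodMk_one {ι R M : Type*} [Fintype ι] [Semiring R] [AddCommMonoid M] [Module R M]
    (μ : ι → R) (V : ι → M) : ∑ i, μ i • (V i, (1 : R)) = (∑ i, μ i • V i, ∑ i, μ i) := by
  simp [Prod.ext_iff, Prod.fst_sum, Prod.snd_sum]

section LinearOrderedField

variable {ι 𝕜 E : Type*} [Fintype ι] [Field 𝕜] [LinearOrder 𝕜] [IsStrictOrderedRing 𝕜]
  [AddCommGroup E] [Module 𝕜 E]

lemma convexHull_range_eq_image_stdSimplex (V : ι → E) :
    convexHull 𝕜 (range V) = Fintype.linearCombination 𝕜 V '' stdSimplex 𝕜 ι := by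
  classical
  rw [← convexHull_basis_eq_stdSimplex, LinearMap.image_convexHull, ← range_comp]
  congr 2
  funext i
  simp [Fintype.linearCombination_apply, ite_smul]

lemma mem_smul_convexHull_range_iff [Nonempty ι] (V : ι → E) {c : 𝕜} (hc : 0 ≤ c) {x : E} :
    x ∈ c • convexHull 𝕜 (range V) ↔
      ∃ μ : ι → 𝕜, (∀ i, 0 ≤ μ i) ∧ ∑ i, μ i • (V i, (1 : 𝕜)) = (x, c) := by
  simp only [sum_smul_prodMk_one, Prod.mk.injEq]
  rcases hc.eq_or_lt with rfl | hc
  · rw [zero_smul_set (convexHull_nonempty_iff.mpr (range_nonempty V)), Set.mem_zero]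
    constructor
    · rintro rfl
      exact ⟨0, fun _ => le_rfl, by simp, by simp⟩
    · rintro ⟨μ, hμ, rfl, hsum⟩
      have hμ0 : ∀ i, μ i = 0 := fun i =>
        (Finset.sum_eq_zero_iff_of_nonneg fun i _ => hμ i).mp hsum i (Finset.mem_univ i)
      simp [hμ0]
  · rw [convexHull_range_eq_image_stdSimplex, Set.mem_smul_set]
    constructor
    · rintro ⟨_, ⟨w, ⟨hw0, hw1⟩, rfl⟩, rfl⟩
      refine ⟨c • w, fun i => mul_nonneg hc.le (hw0 i), ?_, ?_⟩
      · simp [Fintype.linearCombination_apply, Finset.smul_sum, smul_smul]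
      · simp [← Finset.mul_sum, hw1]
    · rintro ⟨μ, hμ, rfl, hsum⟩
      refine ⟨_, ⟨c⁻¹ • μ, ⟨fun i => mul_nonneg (inv_nonneg.mpr hc.le) (hμ i), ?_⟩, rfl⟩, ?_⟩
      · simp [← Finset.mul_sum, hsum, hc.ne']
      · simp [Fintype.linearCombination_apply, Finset.smul_sum, smul_smul, hc.ne']

lemma ordConnected_setOf_nonneg_apply_prodMk (f : E × 𝕜 →ₗ[𝕜] 𝕜) (x : E) :
    {t : 𝕜 | 0 ≤ f (x, t)}.OrdConnected := by
  have hf : ∀ t, f (x, t) = f (x, 0) + t * f (0, 1) := fun t => by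
    rw [← smul_eq_mul, ← map_smul, ← map_add]
    simp
  refine ⟨fun t₁ h₁ t₂ h₂ t ht => ?_⟩
  rw [Set.mem_ofPred_eq, hf] at h₁ h₂ ⊢
  rcases le_total 0 (f (0, 1)) with hd | hd
  · nlinarith [ht.1]
  · nlinarith [ht.2]

end LinearOrderedField

section BarycentricCoordinates

variable {ι k E : Type*} [Field k] [AddCommGroup E] [Module k E] {V : ι → E}
  {b : Module.Basis ι k (E × k)}

lemma repr_add_smul_apply_of_ne (hb : ∀ i, b i = (V i, 1)) (x : E) (t c : k) {i j : ι}
    (hij : i ≠ j) : b.repr (x + c • V j, t + c) i = b.repr (x, t) i := by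
  have h : (x + c • V j, t + c) = (x, t) + c • b j := by simp [hb]
  simp [h, hij.symm]

lemma sum_repr_eq_snd [Fintype ι] (hb : ∀ i, b i = (V i, 1)) (z : E × k) :
    ∑ i, b.repr z i = z.2 := by
  conv_rhs => rw [← b.sum_repr z]
  simp [hb, Prod.snd_sum]

lemma exists_forall_ne_of_vertex_eq_zero [LinearOrder k] {V : Fin 3 → E}
    {b : Module.Basis (Fin 3) k (E × k)} (hb : ∀ i, b i = (V i, 1))
    (hV : Function.Injective V) {j : Fin 3} (hj : V j = 0) {x : E}
    (h : ∀ l, V l ≠ 0 → ∃ t : ℤ, ∀ i ≠ l, 0 ≤ b.repr (x, t) i) :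
    ∃ t : ℤ, ∀ i ≠ j, 0 ≤ b.repr (x, t) i := by
  obtain ⟨l, m, hlj, hmj, hlm⟩ : ∃ l m : Fin 3, l ≠ j ∧ m ≠ j ∧ l ≠ m := by
    fin_cases j <;> decide
  have hconst : ∀ i ≠ j, ∀ t : k, b.repr (x, t) i = b.repr (x, 0) i := fun i hij t => by
    simpa [hj] using repr_add_smul_apply_of_ne hb x 0 t hij
  obtain ⟨tl, htl⟩ := h l (hj ▸ hV.ne hlj)
  obtain ⟨tm, htm⟩ := h m (hj ▸ hV.ne hmj)
  refine ⟨tl, fun i hij => ?_⟩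
  rcases eq_or_ne i l with rfl | hil
  · rw [hconst i hij, ← hconst i hij tm]
    exact htm i hlm
  · exact htl i hil

end BarycentricCoordinates

section PolygonalSemigroup

variable {V : Fin 3 → Fin 2 → ℚ} {b : Module.Basis (Fin 3) ℚ ((Fin 2 → ℚ) × ℚ)}

lemma mem_polySG_iff (hb : ∀ i, b i = (V i, 1)) {x : Fin 2 → ℕ} :
    x ∈ polySG (convexHull ℚ (range V)) ↔ ∃ k : ℕ, ∀ i, 0 ≤ b.repr (toQ x, k) i := by
  refine exists_congr fun k => ?_
  rw [mem_smul_convexHull_range_iff V k.cast_nonneg, ← b.exists_nonneg_sum_smul_eq_iff]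
  simp only [hb]

lemma mem_polySG_of_toQ_eq_smul (hb : ∀ i, b i = (V i, 1)) {s : Fin 2 → ℕ} {N : ℕ} {j : Fin 3}
    (hs : toQ s = (N : ℚ) • V j) : s ∈ polySG (convexHull ℚ (range V)) := by
  refine (mem_polySG_iff hb).mpr ⟨N, fun i => ?_⟩
  have h : (toQ s, (N : ℚ)) = (N : ℚ) • b j := by simp [hb, hs]
  rw [h, map_smul, b.repr_self]
  exact smul_nonneg N.cast_nonneg (Finsupp.single_nonneg.mpr zero_le_one i)

lemma exists_height_of_add_mem (hb : ∀ i, b i = (V i, 1)) {a s : Fin 2 → ℕ} {N : ℕ}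
    {j : Fin 3} (hs : toQ s = (N : ℚ) • V j) (has : a + s ∈ polySG (convexHull ℚ (range V))) :
    ∃ t : ℤ, ∀ i ≠ j, 0 ≤ b.repr (toQ a, t) i := by
  obtain ⟨k, hk⟩ := (mem_polySG_iff hb).mp has
  refine ⟨k - N, fun i hij => ?_⟩
  have h : (toQ (a + s), (k : ℚ)) = (toQ a + (N : ℚ) • V j, ((k - N : ℤ) : ℚ) + N) := by
    rw [← hs]
    ext c <;> simp [toQ]
  rw [← repr_add_smul_apply_of_ne hb _ _ _ hij, ← h]
  exact hk i

lemma mem_polySG_of_forall_add_mem (hb : ∀ i, b i = (V i, 1)) (hV : Function.Injective V)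
    (hV₀ : ∀ j c, 0 ≤ V j c) {a : Fin 2 → ℕ}
    (ha : ∀ s ∈ polySG (convexHull ℚ (range V)), s ≠ 0 →
      a + s ∈ polySG (convexHull ℚ (range V))) :
    a ∈ polySG (convexHull ℚ (range V)) := by
  have hvertex : ∀ j, V j ≠ 0 → ∃ t : ℤ, ∀ i ≠ j, 0 ≤ b.repr (toQ a, t) i := by
    intro j hj
    obtain ⟨N, hN, s, hs⟩ := exists_pos_natCast_mul_eq_natCast (hV₀ j)
    have hsQ : toQ s = (N : ℚ) • V j := funext hs
    have hs₀ : s ≠ 0 := by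
      rintro rfl
      have h₀ : (N : ℚ) • V j = 0 := by rw [← hsQ]; rfl
      exact hj ((smul_eq_zero.mp h₀).resolve_left (by positivity))
    exact exists_height_of_add_mem hb hsQ (ha s (mem_polySG_of_toQ_eq_smul hb hsQ) hs₀)
  have hheight : ∀ j, ∃ t : ℤ, ∀ i ≠ j, 0 ≤ b.repr (toQ a, t) i := fun j =>
    if hj : V j = 0 then exists_forall_ne_of_vertex_eq_zero hb hV hj hvertex else hvertex j hj
  choose t ht using hheight
  obtain ⟨j, hj⟩ := exists_forall_mem_of_forall_ne (by simp)
    (fun i => ordConnected_setOf_nonneg_apply_prodMk (b.coord i) (toQ a))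
    (t := fun j => (t j : ℚ)) fun i j hij => ht j i hij
  have ht₀ : 0 ≤ t j := by
    have := Finset.sum_nonneg fun i (_ : i ∈ Finset.univ) =>
      show 0 ≤ b.repr (toQ a, t j) i from hj i
    rwa [sum_repr_eq_snd hb, Int.cast_nonneg_iff] at this
  lift t j to ℕ using ht₀ with n hn
  exact (mem_polySG_iff hb).mpr ⟨n, by simpa [← hn] using hj⟩

theorem stmt11_general (A B C : Fin 2 → ℚ)
    (hpos : ∀ i, 0 ≤ A i ∧ 0 ≤ B i ∧ 0 ≤ C i)
    (hind : AffineIndependent ℚ ![A, B, C])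
    (S : Set (Fin 2 → ℕ)) (hS : S = polySG (convexHull ℚ {A, B, C}))
    (G : Finset (Fin 2 → ℕ)) (hG : minimalGenSet S G) :
    sbar S G = S := by
  obtain ⟨hGS, -⟩ := hG
  obtain ⟨b, hb⟩ := hind.exists_basis_prodMk_one (by simp)
  have hV₀ : ∀ j c, 0 ≤ ![A, B, C] j c := fun j c => by fin_cases j <;> simp [hpos c]
  have hrange : range ![A, B, C] = {A, B, C} := by
    rw [Matrix.range_cons, Matrix.range_cons, Matrix.range_cons_empty, ← insert_eq, ← insert_eq]
  have hmem : ∀ x, x ∈ AddSubmonoid.closure (G : Set (Fin 2 → ℕ)) ↔ x ∈ S :=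
    Set.ext_iff.mp hGS
  ext a
  refine ⟨fun ha => ?_, fun ha g hg =>
    (hmem _).mp (add_mem ((hmem a).mpr ha) (AddSubmonoid.subset_closure hg))⟩
  have hstep : ∀ s ∈ S, s ≠ 0 → a + s ∈ S := fun s hs hs₀ =>
    (hmem _).mp ((AddSubmonoid.eq_zero_or_add_mem_closure (fun g hg => (hmem _).mpr (ha g hg))
      ((hmem s).mpr hs)).resolve_left hs₀)
  rw [hS, ← hrange] at hstep ⊢
  exact mem_polySG_of_forall_add_mem hb hind.injective hV₀ hstep

/-- For the convex polygonal semigroup `𝔓` of a triangle with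
rational vertices, `𝔓̄ = 𝔓`. -/
theorem stmt11 (A B C : Fin 2 → ℚ)
    (hpos : ∀ i, 0 ≤ A i ∧ 0 ≤ B i ∧ 0 ≤ C i)
    (hind : AffineIndependent ℚ ![A, B, C])
    (S : Set (Fin 2 → ℕ)) (hS : S = polySG (convexHull ℚ {A, B, C}))
    (G : Finset (Fin 2 → ℕ)) (hG : minimalGenSet S G)
    (v1 v2 : Fin 2 → ℕ) (hsimp : Simplicial S v1 v2) :
    sbar S G = S :=
  stmt11_general A B C hpos hind S hS G hG
end PolygonalSemigroup
end
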